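/- arXiv:2605.03723 — 3 statements merged into one kernel-verified Lean document; each statement's English description precedes it below -/
import Mathlib

section
/- Two-point minimax lower bound for change-point localization (Theorem 3). Let δ ∈ (0, 1/2), σ_1,…,σ_N > 0, reals μ_m ≠ μ_h with κ = |μ_m − μ_h|, and integers 1 ≤ τ < τ + h ≤ N such that Σ_{i=τ+1}^{τ+h} κ²/(2σ_i²) ≤ log(1/(4δ)). Let P_1 = ⊗_{i=1}^{N} N(m_i, σ_i²) with m_i = μ_m for i ≤ τ and m_i = μ_h for i > τ, and let P_2 = ⊗_{i=1}^{N} N(m'_i, σ_i²) with m'_i = μ_m for i ≤ τ + h and m'_i = μ_h for i > τ + h. Then for every measurable estimator τ̂ : ℝ^N → ℝ, max{ P_1(|τ̂ − τ| ≥ h/2), P_2(|τ̂ − (τ + h)| ≥ h/2) } ≥ δ. -/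
/-!
The estimator `τ̂` gives the test `A = {|τ̂ - τ| ≥ h/2}`, and off `A` the triangle inequality gives
`|τ̂ - (τ + h)| ≥ h/2`. For densities `p, q` of probability measures `P, Q` and any event `A`,
Cauchy–Schwarz on `A` and on `Aᶜ` bounds the Hellinger affinity `∫ √(p q)` by `√(P A) + √(Q Aᶜ)`,
so its square is at most `4 max (P A) (Q Aᶜ)`. The affinity is multiplicative over product measures
and equals `exp (-(m - m')² / (8 v))` for two Gaussians of common variance `v`. The two change-point
mean vectors differ by `κ` exactly on the `h` coordinates after `τ`, so the squared affinity is
`exp (-S / 2)`, where `S ≤ log (1 / (4 δ))` is the sum in the hypothesis; hence it is at least `4 δ`.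
-/

open MeasureTheory ProbabilityTheory Real
open scoped ENNReal NNReal

section Hellinger

variable {α : Type*} [MeasurableSpace α]

noncomputable def hellingerAffinity (ν : Measure α) (p q : α → ℝ≥0∞) : ℝ≥0∞ :=
  ∫⁻ x, p x ^ (2⁻¹ : ℝ) * q x ^ (2⁻¹ : ℝ) ∂ν

variable {ν : Measure α} {p q : α → ℝ≥0∞}

lemma setLIntegral_rpow_mul_rpow_le (hp : AEMeasurable p ν) (hq : AEMeasurable q ν)
    {s : Set α} (hs : MeasurableSet s) :
    ∫⁻ x in s, p x ^ (2⁻¹ : ℝ) * q x ^ (2⁻¹ : ℝ) ∂ν ≤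
      ν.withDensity p s ^ (2⁻¹ : ℝ) * ν.withDensity q s ^ (2⁻¹ : ℝ) := by
  have := ENNReal.lintegral_mul_le_Lp_mul_Lq (ν.restrict s) .two_two
    (hp.restrict.pow_const (2⁻¹ : ℝ)) (hq.restrict.pow_const (2⁻¹ : ℝ))
  simpa only [Pi.mul_apply, ENNReal.rpow_inv_rpow two_ne_zero, one_div,
    ← withDensity_apply _ hs] using this

lemma hellingerAffinity_le_rpow_add_rpow (hp : AEMeasurable p ν) (hq : AEMeasurable q ν)
    [IsProbabilityMeasure (ν.withDensity p)] [IsProbabilityMeasure (ν.withDensity q)]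
    {s : Set α} (hs : MeasurableSet s) :
    hellingerAffinity ν p q ≤ ν.withDensity p s ^ (2⁻¹ : ℝ) + ν.withDensity q sᶜ ^ (2⁻¹ : ℝ) := by
  have rpow_le_one (P : Measure α) [IsProbabilityMeasure P] (t : Set α) :
      P t ^ (2⁻¹ : ℝ) ≤ 1 :=
    ENNReal.rpow_le_one prob_le_one (by norm_num)
  rw [hellingerAffinity, ← lintegral_add_compl _ hs]
  gcongr
  · calc _ ≤ _ := setLIntegral_rpow_mul_rpow_le hp hq hs
      _ ≤ ν.withDensity p s ^ (2⁻¹ : ℝ) * 1 := by gcongr; exact rpow_le_one _ _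
      _ = _ := mul_one _
  · calc _ ≤ _ := setLIntegral_rpow_mul_rpow_le hp hq hs.compl
      _ ≤ 1 * ν.withDensity q sᶜ ^ (2⁻¹ : ℝ) := by gcongr; exact rpow_le_one _ _
      _ = _ := one_mul _

lemma hellingerAffinity_sq_le_four_mul_max (hp : AEMeasurable p ν) (hq : AEMeasurable q ν)
    [IsProbabilityMeasure (ν.withDensity p)] [IsProbabilityMeasure (ν.withDensity q)]
    {s : Set α} (hs : MeasurableSet s) :
    hellingerAffinity ν p q ^ 2 ≤ 4 * max (ν.withDensity p s) (ν.withDensity q sᶜ) := by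
  set M := max (ν.withDensity p s) (ν.withDensity q sᶜ)
  have hM : hellingerAffinity ν p q ≤ 2 * M ^ (2⁻¹ : ℝ) := by
    rw [two_mul]
    refine (hellingerAffinity_le_rpow_add_rpow hp hq hs).trans ?_
    gcongr
    exacts [le_max_left _ _, le_max_right _ _]
  calc hellingerAffinity ν p q ^ 2 ≤ (2 * M ^ (2⁻¹ : ℝ)) ^ 2 := by gcongr
    _ = 4 * M := by
      rw [mul_pow, ← ENNReal.rpow_two (M ^ _), ENNReal.rpow_inv_rpow two_ne_zero]
      norm_num

end Hellinger

namespace MeasureTheory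

variable {ι : Type*} [Fintype ι]

theorem lintegral_fin_nat_prod_eq_prod {n : ℕ} {E : Fin n → Type*}
    [∀ i, MeasurableSpace (E i)] (μ : ∀ i, Measure (E i)) [∀ i, SigmaFinite (μ i)]
    {f : ∀ i, E i → ℝ≥0∞} (hf : ∀ i, Measurable (f i)) :
    ∫⁻ x, ∏ i, f i (x i) ∂Measure.pi μ = ∏ i, ∫⁻ x, f i x ∂μ i := by
  induction n with
  | zero => simp
  | succ n ih =>
    calc
      _ = ∫⁻ x : E 0 × ((j : Fin n) → E (Fin.succAbove 0 j)),
            f 0 x.1 * ∏ j : Fin n, f (Fin.succAbove 0 j) (x.2 j)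
            ∂(μ 0).prod (Measure.pi fun j ↦ μ (Fin.succAbove 0 j)) := by
          rw [← (measurePreserving_piFinSuccAbove μ 0).lintegral_comp_emb
            (MeasurableEquiv.measurableEmbedding _)]
          refine lintegral_congr fun x ↦ ?_
          rw [Fin.prod_univ_succ]
          rfl
      _ = (∫⁻ x, f 0 x ∂μ 0) *
            ∏ j : Fin n, ∫⁻ x, f (Fin.succAbove 0 j) x ∂μ (Fin.succAbove 0 j) := by
          rw [← ih _ fun j ↦ hf _, lintegral_prod_mul (f := f 0)
            (g := fun y : (j : Fin n) → E (Fin.succAbove 0 j) ↦ ∏ j, f (Fin.succAbove 0 j) (y j))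
            (hf 0).aemeasurable
            (Finset.measurable_prod _ fun j _ ↦ (hf _).comp (measurable_pi_apply j)).aemeasurable]
      _ = ∏ i, ∫⁻ x, f i x ∂μ i := by rw [Fin.prod_univ_succ]; rfl

theorem lintegral_fintype_prod_eq_prod {E : ι → Type*} [∀ i, MeasurableSpace (E i)]
    (μ : ∀ i, Measure (E i)) [∀ i, SigmaFinite (μ i)]
    {f : ∀ i, E i → ℝ≥0∞} (hf : ∀ i, Measurable (f i)) :
    ∫⁻ x, ∏ i, f i (x i) ∂Measure.pi μ = ∏ i, ∫⁻ x, f i x ∂μ i := by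
  let e := (Fintype.equivFin ι).symm
  rw [← (measurePreserving_piCongrLeft (μ := μ) e).lintegral_comp_emb
    (MeasurableEquiv.measurableEmbedding _)]
  simp_rw [← e.prod_comp, MeasurableEquiv.coe_piCongrLeft, Equiv.piCongrLeft_apply_apply]
  exact lintegral_fin_nat_prod_eq_prod (fun i ↦ μ (e i)) fun i ↦ hf (e i)

theorem Measure.pi_withDensity {E : ι → Type*} [∀ i, MeasurableSpace (E i)]
    (μ : ∀ i, Measure (E i)) [∀ i, SigmaFinite (μ i)]
    {f : ∀ i, E i → ℝ≥0∞} (hf : ∀ i, Measurable (f i))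
    [∀ i, SigmaFinite ((μ i).withDensity (f i))] :
    Measure.pi (fun i ↦ (μ i).withDensity (f i)) =
      (Measure.pi μ).withDensity fun x ↦ ∏ i, f i (x i) := by
  refine Measure.pi_eq fun s hs ↦ ?_
  rw [withDensity_apply _ (MeasurableSet.univ_pi hs), Measure.restrict_pi_pi,
    lintegral_fintype_prod_eq_prod _ hf]
  exact Finset.prod_congr rfl fun i _ ↦ (withDensity_apply _ (hs i)).symm

end MeasureTheory

theorem hellingerAffinity_pi {ι : Type*} [Fintype ι] {E : ι → Type*} [∀ i, MeasurableSpace (E i)]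
    (μ : ∀ i, Measure (E i)) [∀ i, SigmaFinite (μ i)]
    {p q : ∀ i, E i → ℝ≥0∞} (hp : ∀ i, Measurable (p i)) (hq : ∀ i, Measurable (q i)) :
    hellingerAffinity (Measure.pi μ) (fun x ↦ ∏ i, p i (x i)) (fun x ↦ ∏ i, q i (x i)) =
      ∏ i, hellingerAffinity (μ i) (p i) (q i) := by
  simp_rw [hellingerAffinity, ← ENNReal.prod_rpow_of_nonneg (inv_nonneg.2 zero_le_two),
    ← Finset.prod_mul_distrib]
  exact lintegral_fintype_prod_eq_prod _ fun i ↦ ((hp i).pow_const _).mul ((hq i).pow_const _)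


section Gaussian

lemma gaussianPDFReal_mul_gaussianPDFReal (m m' : ℝ) {v : ℝ≥0} (hv : v ≠ 0) (x : ℝ) :
    gaussianPDFReal m v x * gaussianPDFReal m' v x =
      (exp (-((m - m') ^ 2 / (8 * v))) * gaussianPDFReal ((m + m') / 2) v x) ^ 2 := by
  have hv : (v : ℝ) ≠ 0 := by exact_mod_cast hv
  have hexp : -(x - m) ^ 2 / (2 * v) + -(x - m') ^ 2 / (2 * v) =
      -((m - m') ^ 2 / (8 * v)) + -((m - m') ^ 2 / (8 * v)) +
        (-(x - (m + m') / 2) ^ 2 / (2 * v) + -(x - (m + m') / 2) ^ 2 / (2 * v)) := by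
    field_simp; ring
  simp only [gaussianPDFReal]
  calc _ = (√(2 * π * v))⁻¹ ^ 2 * exp (-(x - m) ^ 2 / (2 * v) + -(x - m') ^ 2 / (2 * v)) := by
        rw [exp_add]; ring
    _ = _ := by simp only [hexp, exp_add]; ring

lemma hellingerAffinity_gaussianPDF (m m' : ℝ) {v : ℝ≥0} (hv : v ≠ 0) :
    hellingerAffinity volume (gaussianPDF m v) (gaussianPDF m' v) =
      ENNReal.ofReal (exp (-((m - m') ^ 2 / (8 * v)))) := by
  have hpt (x : ℝ) : gaussianPDF m v x ^ (2⁻¹ : ℝ) * gaussianPDF m' v x ^ (2⁻¹ : ℝ) =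
      ENNReal.ofReal (exp (-((m - m') ^ 2 / (8 * v)))) *
        ENNReal.ofReal (gaussianPDFReal ((m + m') / 2) v x) := by
    rw [gaussianPDF, gaussianPDF, ← ENNReal.mul_rpow_of_nonneg _ _ (by norm_num),
      ← ENNReal.ofReal_mul (gaussianPDFReal_nonneg _ _ _),
      ENNReal.ofReal_rpow_of_nonneg
        (mul_nonneg (gaussianPDFReal_nonneg _ _ _) (gaussianPDFReal_nonneg _ _ _)) (by norm_num),
      ← one_div, ← sqrt_eq_rpow,
      gaussianPDFReal_mul_gaussianPDFReal m m' hv,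
      sqrt_sq (mul_nonneg (exp_nonneg _) (gaussianPDFReal_nonneg _ _ _)),
      ENNReal.ofReal_mul (exp_nonneg _)]
  simp_rw [hellingerAffinity, hpt]
  rw [lintegral_const_mul _ (measurable_gaussianPDFReal _ _).ennreal_ofReal,
    lintegral_gaussianPDFReal_eq_one _ hv, mul_one]

variable {ι : Type*} [Fintype ι] {v : ι → ℝ≥0}

lemma pi_gaussianReal_eq_withDensity (m : ι → ℝ) (hv : ∀ i, v i ≠ 0) :
    Measure.pi (fun i ↦ gaussianReal (m i) (v i)) =
      (Measure.pi fun _ ↦ volume).withDensity fun x ↦ ∏ i, gaussianPDF (m i) (v i) (x i) := by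
  have (i : ι) : IsProbabilityMeasure (volume.withDensity (gaussianPDF (m i) (v i))) := by
    rw [← gaussianReal_of_var_ne_zero _ (hv i)]; infer_instance
  simp_rw [gaussianReal_of_var_ne_zero _ (hv _)]
  exact Measure.pi_withDensity _ fun i ↦ measurable_gaussianPDF _ _

lemma hellingerAffinity_pi_gaussianPDF_sq (m m' : ι → ℝ) (hv : ∀ i, v i ≠ 0) :
    hellingerAffinity (Measure.pi fun _ ↦ volume)
        (fun x ↦ ∏ i, gaussianPDF (m i) (v i) (x i))
        (fun x ↦ ∏ i, gaussianPDF (m' i) (v i) (x i)) ^ 2 =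
      ENNReal.ofReal (exp (-∑ i, (m i - m' i) ^ 2 / (4 * v i))) := by
  rw [hellingerAffinity_pi _ (fun i ↦ measurable_gaussianPDF _ _)
    (fun i ↦ measurable_gaussianPDF _ _)]
  simp_rw [hellingerAffinity_gaussianPDF _ _ (hv _)]
  rw [← ENNReal.ofReal_prod_of_nonneg fun i _ ↦ exp_nonneg _, ← exp_sum,
    ← ENNReal.ofReal_pow (exp_nonneg _), ← exp_nat_mul]
  congr 2
  rw [Finset.mul_sum, ← Finset.sum_neg_distrib]
  refine Finset.sum_congr rfl fun i _ ↦ ?_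
  field_simp
  ring

theorem ofReal_exp_le_four_mul_max_pi_gaussianReal (m m' : ι → ℝ) (hv : ∀ i, v i ≠ 0)
    {s : Set (ι → ℝ)} (hs : MeasurableSet s) :
    ENNReal.ofReal (exp (-∑ i, (m i - m' i) ^ 2 / (4 * v i))) ≤
      4 * max (Measure.pi (fun i ↦ gaussianReal (m i) (v i)) s)
        (Measure.pi (fun i ↦ gaussianReal (m' i) (v i)) sᶜ) := by
  have hmeas (m : ι → ℝ) : Measurable fun x : ι → ℝ ↦ ∏ i, gaussianPDF (m i) (v i) (x i) :=
    Finset.measurable_prod _ fun i _ ↦ (measurable_gaussianPDF _ _).comp (measurable_pi_apply i)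
  have (m : ι → ℝ) : IsProbabilityMeasure ((Measure.pi fun _ ↦ volume).withDensity
      fun x ↦ ∏ i, gaussianPDF (m i) (v i) (x i)) := by
    rw [← pi_gaussianReal_eq_withDensity m hv]; infer_instance
  rw [pi_gaussianReal_eq_withDensity m hv, pi_gaussianReal_eq_withDensity m' hv,
    ← hellingerAffinity_pi_gaussianPDF_sq m m' hv]
  exact hellingerAffinity_sq_le_four_mul_max (hmeas m).aemeasurable (hmeas m').aemeasurable hs

end Gaussian

lemma sum_sq_sub_changePointMean {N : ℕ} (a b : ℝ) (τ h : ℕ) (σ : Fin N → ℝ≥0) :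
    ∑ i : Fin N, ((if (i : ℕ) < τ then a else b) - (if (i : ℕ) < τ + h then a else b)) ^ 2 /
        (4 * ((σ i ^ 2 : ℝ≥0) : ℝ)) =
      (∑ i ∈ Finset.univ.filter (fun i : Fin N ↦ τ ≤ (i : ℕ) ∧ (i : ℕ) < τ + h),
        (a - b) ^ 2 / (2 * (σ i : ℝ) ^ 2)) / 2 := by
  rw [Finset.sum_div, Finset.sum_filter]
  refine Finset.sum_congr rfl fun i _ ↦ ?_
  split_ifs <;> first | omega | (push_cast; ring)

theorem two_point_minimax_lower_bound_general
    (N : ℕ) (σ : Fin N → NNReal) (hσ : ∀ i, 0 < σ i)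
    (μm μh : ℝ)
    (δ : ℝ) (hδ0 : 0 < δ)
    (τ h : ℕ)
    (hKL : ∑ i ∈ Finset.univ.filter (fun i : Fin N => τ ≤ (i : ℕ) ∧ (i : ℕ) < τ + h),
        (μm - μh) ^ 2 / (2 * ((σ i : ℝ)) ^ 2) ≤ Real.log (1 / (4 * δ)))
    (P₁ P₂ : Measure (Fin N → ℝ))
    (hP₁ : P₁ = Measure.pi (fun i : Fin N =>
      gaussianReal (if (i : ℕ) < τ then μm else μh) ((σ i) ^ 2)))
    (hP₂ : P₂ = Measure.pi (fun i : Fin N =>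
      gaussianReal (if (i : ℕ) < τ + h then μm else μh) ((σ i) ^ 2)))
    (τhat : (Fin N → ℝ) → ℝ) (hτhat : Measurable τhat) :
    ENNReal.ofReal δ ≤
      max (P₁ {x | (h : ℝ) / 2 ≤ |τhat x - (τ : ℝ)|})
          (P₂ {x | (h : ℝ) / 2 ≤ |τhat x - ((τ : ℝ) + (h : ℝ))|}) := by
  set A : Set (Fin N → ℝ) := {x | (h : ℝ) / 2 ≤ |τhat x - (τ : ℝ)|}
  set B : Set (Fin N → ℝ) := {x | (h : ℝ) / 2 ≤ |τhat x - ((τ : ℝ) + (h : ℝ))|}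
  set S := ∑ i ∈ Finset.univ.filter (fun i : Fin N => τ ≤ (i : ℕ) ∧ (i : ℕ) < τ + h),
    (μm - μh) ^ 2 / (2 * ((σ i : ℝ)) ^ 2)
  have hA : MeasurableSet A := measurableSet_le measurable_const (hτhat.sub_const _).abs
  have hAc : Aᶜ ⊆ B := fun x hx ↦ by
    simp only [A, B, Set.mem_compl_iff, Set.mem_ofPred_eq, not_le, abs_lt] at hx ⊢
    exact le_abs.2 (Or.inr (by linarith [hx.2]))
  have h4δ : 4 * δ ≤ exp (-(S / 2)) :=
    calc 4 * δ = exp (-log (1 / (4 * δ))) := by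
          rw [one_div, log_inv, neg_neg, exp_log (by positivity)]
      _ ≤ exp (-(S / 2)) := by
          have hS : 0 ≤ S := Finset.sum_nonneg fun i _ ↦ by positivity
          gcongr
          linarith
  have hgauss := ofReal_exp_le_four_mul_max_pi_gaussianReal
    (fun i : Fin N ↦ if (i : ℕ) < τ then μm else μh)
    (fun i : Fin N ↦ if (i : ℕ) < τ + h then μm else μh) (fun i ↦ pow_ne_zero 2 (hσ i).ne') hA
  rw [← hP₁, ← hP₂, sum_sq_sub_changePointMean] at hgauss
  have h4 : ENNReal.ofReal (4 * δ) ≤ 4 * max (P₁ A) (P₂ B) :=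
    (ENNReal.ofReal_le_ofReal h4δ).trans (hgauss.trans (by gcongr))
  rw [ENNReal.ofReal_mul (by norm_num), ENNReal.ofReal_ofNat] at h4
  exact (ENNReal.mul_le_mul_iff_right (by norm_num) (by norm_num)).1 h4

/-- **Two-point minimax lower bound for change-point localization.**
Let `δ ∈ (0, 1/2)`, `σ_i > 0`, `κ = |μ_m - μ_h| > 0`, and `1 ≤ τ < τ + h ≤ N` with
`Σ_{i=τ+1}^{τ+h} κ²/(2σ_i²) ≤ log(1/(4δ))`. With `P₁` the product Gaussian measure
whose mean changes from `μ_m` to `μ_h` after coordinate `τ` (1-based) and `P₂` the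
one changing after coordinate `τ + h`, every measurable estimator
`τ̂ : ℝ^N → ℝ` satisfies
`max{P₁(|τ̂ - τ| ≥ h/2), P₂(|τ̂ - (τ+h)| ≥ h/2)} ≥ δ`. -/
theorem two_point_minimax_lower_bound
    (N : ℕ) (σ : Fin N → NNReal) (hσ : ∀ i, 0 < σ i)
    (μm μh : ℝ) (hne : μm ≠ μh)
    (δ : ℝ) (hδ0 : 0 < δ) (hδhalf : δ < 1 / 2)
    (τ h : ℕ) (hτ1 : 1 ≤ τ) (hh : 0 < h) (hτhN : τ + h ≤ N)
    (hKL : ∑ i ∈ Finset.univ.filter (fun i : Fin N => τ ≤ (i : ℕ) ∧ (i : ℕ) < τ + h),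
        (μm - μh) ^ 2 / (2 * ((σ i : ℝ)) ^ 2) ≤ Real.log (1 / (4 * δ)))
    (P₁ P₂ : Measure (Fin N → ℝ))
    (hP₁ : P₁ = Measure.pi (fun i : Fin N =>
      gaussianReal (if (i : ℕ) < τ then μm else μh) ((σ i) ^ 2)))
    (hP₂ : P₂ = Measure.pi (fun i : Fin N =>
      gaussianReal (if (i : ℕ) < τ + h then μm else μh) ((σ i) ^ 2)))
    (τhat : (Fin N → ℝ) → ℝ) (hτhat : Measurable τhat) :
    ENNReal.ofReal δ ≤
      max (P₁ {x | (h : ℝ) / 2 ≤ |τhat x - (τ : ℝ)|})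
          (P₂ {x | (h : ℝ) / 2 ≤ |τhat x - ((τ : ℝ) + (h : ℝ))|}) :=
  two_point_minimax_lower_bound_general N σ hσ μm μh δ hδ0 τ h hKL P₁ P₂ hP₁ hP₂ τhat hτhat
end

section
/- Maximizer of the weighted CUSUM of a single-change mean (Lemma A.1, first claim). Suppose μ ∈ ℝ^N has a single change at τ on [s,e]. Then W_{s,e}^{μ}(τ) = max_{s ≤ b < e} W_{s,e}^{μ}(b), i.e., the weighted CUSUM of the mean vector over [s,e] is maximized at the change point τ. -/
open MeasureTheory ProbabilityTheory

/-- Cumulative weight `S^w_{u:v} = Σ_{i=u}^{v} w_i`. -/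
noncomputable def Sw (w : ℕ → ℝ) (u v : ℕ) : ℝ := ∑ i ∈ Finset.Icc u v, w i

/-- Weighted inner product `⟨x,y⟩_w = Σ_{i=1}^{N} w_i x_i y_i`. -/
noncomputable def winner (N : ℕ) (w x y : ℕ → ℝ) : ℝ :=
  ∑ i ∈ Finset.Icc 1 N, w i * x i * y i

/-- Weighted norm `‖x‖_w = ⟨x,x⟩_w^{1/2}`. -/
noncomputable def wnorm (N : ℕ) (w x : ℕ → ℝ) : ℝ := Real.sqrt (winner N w x x)

/-- Weighted CUSUM statistic `W_{s,e}^{v}(b)`. -/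
noncomputable def wCUSUM (w v : ℕ → ℝ) (s e b : ℕ) : ℝ :=
  Real.sqrt (Sw w s b * Sw w (b + 1) e / Sw w s e) *
    |(Sw w s b)⁻¹ * ∑ i ∈ Finset.Icc s b, w i * v i
      - (Sw w (b + 1) e)⁻¹ * ∑ i ∈ Finset.Icc (b + 1) e, w i * v i|

/-- The CUSUM contrast vector `ψ_{s,e}^{b}`. -/
noncomputable def psiContrast (w : ℕ → ℝ) (s e b : ℕ) (i : ℕ) : ℝ :=
  if s ≤ i ∧ i ≤ b then Real.sqrt (Sw w (b + 1) e / (Sw w s b * Sw w s e))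
  else if b < i ∧ i ≤ e then -Real.sqrt (Sw w s b / (Sw w s e * Sw w (b + 1) e))
  else 0

/-!
Write `A = S_{s:b}`, `B = S_{b+1:e}`, `T = S_{s:e}` and `κ = |α - β|`. For `b ≤ τ` the left
mean is `α` while the right mean is diluted towards `α` by the weight `S_{b+1:τ}`, so
`W(b) = κ √(AB/T) · S_{τ+1:e}/B`; symmetrically `W(b) = κ √(AB/T) · S_{s:τ}/A` for `τ ≤ b`.
Squaring, `W(b) ≤ W(τ)` reduces to `A · S_{τ+1:e} ≤ S_{s:τ} · B` (resp. its mirror image),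
which holds because `A` grows and `B` shrinks as `b` moves right.
-/

theorem Finset.sum_Icc_consecutive {M : Type*} [AddCommMonoid M] (f : ℕ → M) {u m v : ℕ}
    (hum : u ≤ m + 1) (hmv : m ≤ v) :
    ∑ i ∈ Icc u m, f i + ∑ i ∈ Icc (m + 1) v, f i = ∑ i ∈ Icc u v, f i := by
  rw [← sum_union (disjoint_left.2 fun i hi hi' => by simp only [mem_Icc] at hi hi'; omega)]
  congr 1
  ext i
  simp only [mem_union, mem_Icc]
  omega

theorem Finset.sum_Icc_mul_of_eq_const {R : Type*} [CommSemiring R] (w μ : ℕ → R) {c : R} {u v : ℕ}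
    (h : ∀ i, u ≤ i → i ≤ v → μ i = c) :
    ∑ i ∈ Icc u v, w i * μ i = c * ∑ i ∈ Icc u v, w i := by
  rw [mul_sum]
  refine sum_congr rfl fun i hi => ?_
  rw [mem_Icc] at hi
  rw [h i hi.1 hi.2, mul_comm]

namespace Sw

theorem add_consecutive {w : ℕ → ℝ} {u m v : ℕ} (hum : u ≤ m + 1) (hmv : m ≤ v) :
    Sw w u m + Sw w (m + 1) v = Sw w u v :=
  Finset.sum_Icc_consecutive w hum hmv

theorem pos {w : ℕ → ℝ} (hw : ∀ i, 0 < w i) {u v : ℕ} (h : u ≤ v) : 0 < Sw w u v :=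
  Finset.sum_pos (fun i _ => hw i) (Finset.nonempty_Icc.2 h)

theorem mono {w : ℕ → ℝ} (hw : ∀ i, 0 < w i) {u u' v v' : ℕ} (hu : u' ≤ u) (hv : v ≤ v') :
    Sw w u v ≤ Sw w u' v' :=
  Finset.sum_le_sum_of_subset_of_nonneg (Finset.Icc_subset_Icc hu hv) fun i _ _ => (hw i).le

theorem nonneg {w : ℕ → ℝ} (hw : ∀ i, 0 < w i) (u v : ℕ) : 0 ≤ Sw w u v :=
  Finset.sum_nonneg fun i _ => (hw i).le

end Sw

theorem sqrt_mul_div_le_sqrt {A A₀ B D T : ℝ} (hA : 0 ≤ A) (hAA₀ : A ≤ A₀) (hD : 0 < D)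
    (hDB : D ≤ B) (hT : 0 ≤ T) :
    Real.sqrt (A * B / T) * (D / B) ≤ Real.sqrt (A₀ * D / T) := by
  have hB : 0 < B := hD.trans_le hDB
  calc Real.sqrt (A * B / T) * (D / B) = Real.sqrt (A * B / T * (D / B) ^ 2) := by
        rw [Real.sqrt_mul' _ (sq_nonneg _), Real.sqrt_sq (div_pos hD hB).le]
    _ = Real.sqrt (A * D / T * (D / B)) := by
        congr 1
        field_simp
    _ ≤ Real.sqrt (A₀ * D / T * 1) := Real.sqrt_le_sqrt <|
        mul_le_mul (by gcongr) (div_le_one_of_le₀ hDB hB.le) (by positivity)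
          (div_nonneg (mul_nonneg (hA.trans hAA₀) hD.le) hT)
    _ = Real.sqrt (A₀ * D / T) := by rw [mul_one]

section SingleChange

variable {w μ : ℕ → ℝ} {s e τ b : ℕ} {α β : ℝ}

theorem wCUSUM_of_le_changePoint (hw : ∀ i, 0 < w i)
    (hα : ∀ i, s ≤ i → i ≤ τ → μ i = α) (hβ : ∀ i, τ < i → i ≤ e → μ i = β)
    (hsb : s ≤ b) (hbτ : b ≤ τ) (hτe : τ < e) :
    wCUSUM w μ s e b
      = |α - β| * (Real.sqrt (Sw w s b * Sw w (b + 1) e / Sw w s e)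
          * (Sw w (τ + 1) e / Sw w (b + 1) e)) := by
  have hA := Sw.pos hw hsb
  have hB := Sw.pos hw (hbτ.trans_lt hτe)
  have hBsplit := Sw.add_consecutive (w := w) (by omega : b + 1 ≤ τ + 1) hτe.le
  have hleft : ∑ i ∈ Finset.Icc s b, w i * μ i = α * Sw w s b :=
    Finset.sum_Icc_mul_of_eq_const w μ fun i hi hi' => hα i hi (hi'.trans hbτ)
  have hright : ∑ i ∈ Finset.Icc (b + 1) e, w i * μ i
      = α * Sw w (b + 1) τ + β * Sw w (τ + 1) e := by
    rw [← Finset.sum_Icc_consecutive _ (by omega : b + 1 ≤ τ + 1) hτe.le,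
      Finset.sum_Icc_mul_of_eq_const w μ fun i hi hi' => hα i (by omega) hi',
      Finset.sum_Icc_mul_of_eq_const w μ fun i hi hi' => hβ i (by omega) hi']
    rfl
  have hcontrast : (Sw w s b)⁻¹ * (α * Sw w s b)
      - (Sw w (b + 1) e)⁻¹ * (α * Sw w (b + 1) τ + β * Sw w (τ + 1) e)
      = (α - β) * (Sw w (τ + 1) e / Sw w (b + 1) e) := by
    rw [← hBsplit] at hB ⊢
    field_simp
    ring
  rw [wCUSUM, hleft, hright, hcontrast, abs_mul,
    abs_of_nonneg (div_nonneg (Sw.nonneg hw _ _) hB.le)]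
  ring

theorem wCUSUM_of_changePoint_le (hw : ∀ i, 0 < w i)
    (hα : ∀ i, s ≤ i → i ≤ τ → μ i = α) (hβ : ∀ i, τ < i → i ≤ e → μ i = β)
    (hsτ : s ≤ τ) (hτb : τ ≤ b) (hbe : b < e) :
    wCUSUM w μ s e b
      = |α - β| * (Real.sqrt (Sw w s b * Sw w (b + 1) e / Sw w s e)
          * (Sw w s τ / Sw w s b)) := by
  have hA := Sw.pos hw (hsτ.trans hτb)
  have hAsplit := Sw.add_consecutive (w := w) (by omega : s ≤ τ + 1) hτb
  have hleft : ∑ i ∈ Finset.Icc s b, w i * μ i = α * Sw w s τ + β * Sw w (τ + 1) b := by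
    rw [← Finset.sum_Icc_consecutive _ (by omega : s ≤ τ + 1) hτb,
      Finset.sum_Icc_mul_of_eq_const w μ fun i hi hi' => hα i hi hi',
      Finset.sum_Icc_mul_of_eq_const w μ fun i hi hi' => hβ i (by omega) (by omega)]
    rfl
  have hright : ∑ i ∈ Finset.Icc (b + 1) e, w i * μ i = β * Sw w (b + 1) e :=
    Finset.sum_Icc_mul_of_eq_const w μ fun i hi hi' => hβ i (by omega) hi'
  have hcontrast : (Sw w s b)⁻¹ * (α * Sw w s τ + β * Sw w (τ + 1) b)
      - (Sw w (b + 1) e)⁻¹ * (β * Sw w (b + 1) e)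
      = (α - β) * (Sw w s τ / Sw w s b) := by
    have hB := Sw.pos hw hbe
    rw [← hAsplit] at hA ⊢
    field_simp
    ring
  rw [wCUSUM, hleft, hright, hcontrast, abs_mul,
    abs_of_nonneg (div_nonneg (Sw.nonneg hw _ _) hA.le)]
  ring

end SingleChange

theorem wcusum_single_change_maximized_at_change_point_general
    (w : ℕ → ℝ) (hw : ∀ i, 0 < w i)
    (μvec : ℕ → ℝ) (s e τ : ℕ)
    (hsτ : s ≤ τ) (hτe : τ < e)
    (α β : ℝ)
    (hα : ∀ i, s ≤ i → i ≤ τ → μvec i = α)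
    (hβ : ∀ i, τ < i → i ≤ e → μvec i = β) :
    ∀ b, s ≤ b → b < e → wCUSUM w μvec s e b ≤ wCUSUM w μvec s e τ := by
  intro b hsb hbe
  have hT := Sw.nonneg hw s e
  have hA₀ := Sw.pos hw hsτ
  have hD := Sw.pos hw hτe
  rw [wCUSUM_of_le_changePoint hw hα hβ hsτ le_rfl hτe, div_self hD.ne', mul_one]
  rcases le_or_gt b τ with hbτ | hτb
  · rw [wCUSUM_of_le_changePoint hw hα hβ hsb hbτ hτe]
    exact mul_le_mul_of_nonneg_left (sqrt_mul_div_le_sqrt (Sw.nonneg hw s b)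
      (Sw.mono hw le_rfl hbτ) hD (Sw.mono hw (by omega) le_rfl) hT) (abs_nonneg _)
  · rw [wCUSUM_of_changePoint_le hw hα hβ hsτ hτb.le hbe, mul_comm (Sw w s b),
      mul_comm (Sw w s τ)]
    exact mul_le_mul_of_nonneg_left (sqrt_mul_div_le_sqrt (Sw.nonneg hw (b + 1) e)
      (Sw.mono hw (by omega) le_rfl) hA₀ (Sw.mono hw le_rfl hτb.le) hT) (abs_nonneg _)

/-- **Maximizer of the weighted CUSUM of a single-change mean (Lemma A.1, first claim).**
If `μ` has a single change at `τ` on `[s,e]`, then the weighted CUSUM of the mean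
vector over `[s,e]` is maximized at the change point `τ`:
`W_{s,e}^{μ}(τ) = max_{s ≤ b < e} W_{s,e}^{μ}(b)`. -/
theorem wcusum_single_change_maximized_at_change_point
    (N : ℕ) (w : ℕ → ℝ) (hw : ∀ i, 0 < w i)
    (μvec : ℕ → ℝ) (s e τ : ℕ)
    (hs : 1 ≤ s) (hsτ : s ≤ τ) (hτe : τ < e) (heN : e ≤ N)
    (α β : ℝ)
    (hα : ∀ i, s ≤ i → i ≤ τ → μvec i = α)
    (hβ : ∀ i, τ < i → i ≤ e → μvec i = β) :
    ∀ b, s ≤ b → b < e → wCUSUM w μvec s e b ≤ wCUSUM w μvec s e τ :=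
  wcusum_single_change_maximized_at_change_point_general w hw μvec s e τ hsτ hτe α β hα hβ
end

section
/- Projection identity for the weighted CUSUM (Lemma A.1, equation (8)). Suppose μ ∈ ℝ^N has a single change at τ on [s,e]. Then for every s ≤ b < e: ‖ψ_{s,e}^{b}·⟨ψ_{s,e}^{b}, μ⟩_w − ψ_{s,e}^{τ}·⟨ψ_{s,e}^{τ}, μ⟩_w‖_w² = (W_{s,e}^{μ}(τ))² − (W_{s,e}^{μ}(b))². -/
open MeasureTheory ProbabilityTheory

/-! `ψ_{s,e}^b` is a `w`-unit vector supported on `[s,e]` and `w`-orthogonal to the constants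
there, and `W_{s,e}^v(b) = |⟨ψ_{s,e}^b, v⟩_w|`. Since `ψ_{s,e}^τ` takes one value on `[s,τ]` and
another on `(τ,e]`, a mean with a single change at `τ` agrees on `[s,e]` with `a + c ψ_{s,e}^τ`.
Hence `⟨ψ_{s,e}^τ, μ⟩_w = c` and `⟨ψ_{s,e}^b, μ⟩_w = c ρ` with `ρ = ⟨ψ_{s,e}^b, ψ_{s,e}^τ⟩_w`,
and the squared norm expands to `c²ρ² - 2c²ρ² + c² = c² - (cρ)²`. -/

open Finset

lemma sum_Icc_eq_sum_Icc_add_sum_Icc {M : Type*} [AddCommMonoid M] (f : ℕ → M) {u m v : ℕ}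
    (hum : u ≤ m + 1) (hmv : m ≤ v) :
    ∑ i ∈ Icc u v, f i = ∑ i ∈ Icc u m, f i + ∑ i ∈ Icc (m + 1) v, f i := by
  rw [← sum_union (disjoint_left.2 fun i hi hj => by simp only [mem_Icc] at hi hj; omega)]
  congr 1
  ext i
  simp only [mem_Icc, mem_union]
  omega

lemma Sw_eq_add (w : ℕ → ℝ) {u m v : ℕ} (hum : u ≤ m + 1) (hmv : m ≤ v) :
    Sw w u v = Sw w u m + Sw w (m + 1) v :=
  sum_Icc_eq_sum_Icc_add_sum_Icc w hum hmv

lemma Sw_nonneg {w : ℕ → ℝ} (hw : ∀ i, 0 ≤ w i) (u v : ℕ) : 0 ≤ Sw w u v :=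
  sum_nonneg fun i _ => hw i

lemma Sw_pos {w : ℕ → ℝ} (hw : ∀ i, 0 < w i) {u v : ℕ} (h : u ≤ v) : 0 < Sw w u v :=
  sum_pos (fun i _ => hw i) (nonempty_Icc.2 h)

lemma sum_mul_eq_mul_Sw {w g : ℕ → ℝ} {u v : ℕ} {k : ℝ} (hg : ∀ i ∈ Icc u v, g i = k) :
    ∑ i ∈ Icc u v, w i * g i = k * Sw w u v := by
  rw [Sw, mul_sum]
  exact sum_congr rfl fun i hi => by rw [hg i hi, mul_comm]

lemma sum_mul_add_mul {w g h : ℕ → ℝ} {u v : ℕ} {a c : ℝ}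
    (hg : ∀ i ∈ Icc u v, g i = a + c * h i) :
    ∑ i ∈ Icc u v, w i * g i = a * Sw w u v + c * ∑ i ∈ Icc u v, w i * h i := by
  rw [Sw, mul_sum, mul_sum, ← sum_add_distrib]
  exact sum_congr rfl fun i hi => by rw [hg i hi]; ring

lemma Real.sqrt_div_mul_eq {x y c : ℝ} (hc : 0 ≤ c) : √(x / (c * y)) = √(c * x / y) / c := by
  rcases hc.eq_or_lt with rfl | hc
  · simp
  rw [eq_div_iff hc.ne']
  calc √(x / (c * y)) * c = √(x / (c * y)) * √(c ^ 2) := by rw [Real.sqrt_sq hc.le]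
    _ = √(x / (c * y) * c ^ 2) := (Real.sqrt_mul' _ (sq_nonneg c)).symm
    _ = √(c * x / y) := by congr 1; field_simp

lemma winner_self_nonneg (N : ℕ) {w : ℕ → ℝ} (hw : ∀ i, 0 ≤ w i) (x : ℕ → ℝ) :
    0 ≤ winner N w x x :=
  sum_nonneg fun i _ => by rw [mul_assoc]; exact mul_nonneg (hw i) (mul_self_nonneg _)

lemma winner_mul_sub_mul_self (N : ℕ) (w x y : ℕ → ℝ) (a b : ℝ) :
    winner N w (fun i => x i * a - y i * b) (fun i => x i * a - y i * b)
      = a ^ 2 * winner N w x x - 2 * a * b * winner N w x y + b ^ 2 * winner N w y y := by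
  simp only [winner, mul_sum, ← sum_sub_distrib, ← sum_add_distrib]
  exact sum_congr rfl fun i _ => by ring

lemma exists_add_mul_eq_of_ne {u v : ℝ} (h : u ≠ v) (α β : ℝ) :
    ∃ a c : ℝ, a + c * u = α ∧ a + c * v = β :=
  ⟨α - (α - β) / (u - v) * u, (α - β) / (u - v), by ring, by
    field_simp [sub_ne_zero.2 h]; ring⟩

section psiContrast

variable {w : ℕ → ℝ} {s e b : ℕ}

lemma psiContrast_of_le (hw : ∀ i, 0 ≤ w i) {i : ℕ} (hsi : s ≤ i) (hib : i ≤ b) :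
    psiContrast w s e b i = √(Sw w s b * Sw w (b + 1) e / Sw w s e) / Sw w s b := by
  rw [psiContrast, if_pos ⟨hsi, hib⟩, Real.sqrt_div_mul_eq (Sw_nonneg hw s b)]

lemma psiContrast_of_lt (hw : ∀ i, 0 ≤ w i) {i : ℕ} (hbi : b < i) (hie : i ≤ e) :
    psiContrast w s e b i = -(√(Sw w s b * Sw w (b + 1) e / Sw w s e) / Sw w (b + 1) e) := by
  rw [psiContrast, if_neg (by omega), if_pos ⟨hbi, hie⟩, mul_comm (Sw w s e),
    Real.sqrt_div_mul_eq (Sw_nonneg hw _ e), mul_comm (Sw w (b + 1) e)]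

lemma psiContrast_eq_zero (hsb : s ≤ b) (hbe : b ≤ e) {i : ℕ} (hi : i ∉ Icc s e) :
    psiContrast w s e b i = 0 := by
  simp only [mem_Icc] at hi
  rw [psiContrast, if_neg (by omega), if_neg (by omega)]

/-- `⟨ψ_{s,e}^b, g⟩_w` is the signed weighted CUSUM of `g`. -/
lemma winner_psiContrast (N : ℕ) (hw : ∀ i, 0 ≤ w i) (hs : 1 ≤ s) (hsb : s ≤ b) (hbe : b < e)
    (heN : e ≤ N) (g : ℕ → ℝ) :
    winner N w (psiContrast w s e b) g
      = √(Sw w s b * Sw w (b + 1) e / Sw w s e) *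
          ((Sw w s b)⁻¹ * ∑ i ∈ Icc s b, w i * g i
            - (Sw w (b + 1) e)⁻¹ * ∑ i ∈ Icc (b + 1) e, w i * g i) := by
  have hsupp : winner N w (psiContrast w s e b) g
      = ∑ i ∈ Icc s e, w i * psiContrast w s e b i * g i :=
    (sum_subset (Icc_subset_Icc hs heN) fun i _ hi => by
      rw [psiContrast_eq_zero hsb hbe.le hi, mul_zero, zero_mul]).symm
  rw [hsupp, sum_Icc_eq_sum_Icc_add_sum_Icc _ (by omega) hbe.le, mul_sub, mul_sum, mul_sum,
    mul_sum, mul_sum, sub_eq_add_neg, ← sum_neg_distrib]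
  congr 1 <;> refine sum_congr rfl fun i hi => ?_ <;> simp only [mem_Icc] at hi
  · rw [psiContrast_of_le hw hi.1 hi.2]; ring
  · rw [psiContrast_of_lt hw (by omega) hi.2]; ring

lemma wCUSUM_eq_abs_winner (N : ℕ) (hw : ∀ i, 0 ≤ w i) (hs : 1 ≤ s) (hsb : s ≤ b)
    (hbe : b < e) (heN : e ≤ N) (g : ℕ → ℝ) :
    wCUSUM w g s e b = |winner N w (psiContrast w s e b) g| := by
  rw [winner_psiContrast N hw hs hsb hbe heN, abs_mul, abs_of_nonneg (Real.sqrt_nonneg _),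
    wCUSUM]

lemma winner_psiContrast_self (N : ℕ) (hw : ∀ i, 0 < w i) (hs : 1 ≤ s) (hsb : s ≤ b)
    (hbe : b < e) (heN : e ≤ N) :
    winner N w (psiContrast w s e b) (psiContrast w s e b) = 1 := by
  have hw' i := (hw i).le
  have h₁ : 0 < Sw w s b := Sw_pos hw hsb
  have h₂ : 0 < Sw w (b + 1) e := Sw_pos hw hbe
  have hS : Sw w s e = Sw w s b + Sw w (b + 1) e := Sw_eq_add w (by omega) hbe.le
  have hr := Real.sq_sqrt (div_nonneg (mul_nonneg h₁.le h₂.le) (Sw_nonneg hw' s e))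
  rw [winner_psiContrast N hw' hs hsb hbe heN,
    sum_mul_eq_mul_Sw fun i hi => psiContrast_of_le hw' (mem_Icc.1 hi).1 (mem_Icc.1 hi).2,
    sum_mul_eq_mul_Sw fun i hi => psiContrast_of_lt hw' (by simp at hi; omega) (mem_Icc.1 hi).2]
  rw [hS] at hr ⊢
  field_simp
  rw [hr]
  field_simp
  ring

/-- `ψ_{s,e}^b` is `w`-orthogonal to the constants on `[s,e]`. -/
lemma winner_psiContrast_of_eq_add_mul (N : ℕ) (hw : ∀ i, 0 < w i) (hs : 1 ≤ s) (hsb : s ≤ b)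
    (hbe : b < e) (heN : e ≤ N) {g h : ℕ → ℝ} {a c : ℝ}
    (hg : ∀ i, s ≤ i → i ≤ e → g i = a + c * h i) :
    winner N w (psiContrast w s e b) g = c * winner N w (psiContrast w s e b) h := by
  have hw' i := (hw i).le
  have h₁ := (Sw_pos hw hsb).ne'
  have h₂ := (Sw_pos hw hbe).ne'
  rw [winner_psiContrast N hw' hs hsb hbe heN, winner_psiContrast N hw' hs hsb hbe heN,
    sum_mul_add_mul fun i hi => hg i (mem_Icc.1 hi).1 (by simp at hi; omega),
    sum_mul_add_mul fun i hi => hg i (by simp at hi; omega) (mem_Icc.1 hi).2]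
  field_simp
  ring

lemma exists_eq_add_mul_psiContrast (hw : ∀ i, 0 < w i) (hsb : s ≤ b) (hbe : b < e)
    {g : ℕ → ℝ} {α β : ℝ} (hα : ∀ i, s ≤ i → i ≤ b → g i = α)
    (hβ : ∀ i, b < i → i ≤ e → g i = β) :
    ∃ a c : ℝ, ∀ i, s ≤ i → i ≤ e → g i = a + c * psiContrast w s e b i := by
  have hw' i := (hw i).le
  have h₁ : 0 < Sw w s b := Sw_pos hw hsb
  have h₂ : 0 < Sw w (b + 1) e := Sw_pos hw hbe
  have hS : 0 < Sw w s e := Sw_pos hw (by omega)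
  have hne : √(Sw w s b * Sw w (b + 1) e / Sw w s e) / Sw w s b
      ≠ -(√(Sw w s b * Sw w (b + 1) e / Sw w s e) / Sw w (b + 1) e) :=
    (neg_neg_of_pos (by positivity)).trans (by positivity) |>.ne'
  obtain ⟨a, c, hα', hβ'⟩ := exists_add_mul_eq_of_ne hne α β
  refine ⟨a, c, fun i hsi hie => ?_⟩
  rcases le_or_gt i b with hib | hbi
  · rw [hα i hsi hib, psiContrast_of_le hw' hsi hib, hα']
  · rw [hβ i hbi hie, psiContrast_of_lt hw' hbi hie, hβ']

end psiContrast

/-- **Projection identity for the weighted CUSUM (Lemma A.1, equation (8)).**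
If `μ` has a single change at `τ` on `[s,e]`, then for every `s ≤ b < e`:
`‖ψ_{s,e}^{b}·⟨ψ_{s,e}^{b},μ⟩_w − ψ_{s,e}^{τ}·⟨ψ_{s,e}^{τ},μ⟩_w‖_w²
  = (W_{s,e}^{μ}(τ))² − (W_{s,e}^{μ}(b))²`. -/
theorem wcusum_projection_identity
    (N : ℕ) (w : ℕ → ℝ) (hw : ∀ i, 0 < w i)
    (μvec : ℕ → ℝ) (s e τ : ℕ)
    (hs : 1 ≤ s) (hsτ : s ≤ τ) (hτe : τ < e) (heN : e ≤ N)
    (α β : ℝ)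
    (hα : ∀ i, s ≤ i → i ≤ τ → μvec i = α)
    (hβ : ∀ i, τ < i → i ≤ e → μvec i = β) :
    ∀ b, s ≤ b → b < e →
      (wnorm N w (fun i =>
          psiContrast w s e b i * winner N w (psiContrast w s e b) μvec
            - psiContrast w s e τ i * winner N w (psiContrast w s e τ) μvec)) ^ 2
        = (wCUSUM w μvec s e τ) ^ 2 - (wCUSUM w μvec s e b) ^ 2 := by
  intro b hsb hbe
  have hw' i := (hw i).le
  obtain ⟨a, c, hμ⟩ := exists_eq_add_mul_psiContrast hw hsτ hτe hα hβ
  have hτ : winner N w (psiContrast w s e τ) μvec = c := by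
    rw [winner_psiContrast_of_eq_add_mul N hw hs hsτ hτe heN hμ,
      winner_psiContrast_self N hw hs hsτ hτe heN, mul_one]
  rw [wnorm, Real.sq_sqrt (winner_self_nonneg N hw' _), winner_mul_sub_mul_self,
    winner_psiContrast_self N hw hs hsb hbe heN, winner_psiContrast_self N hw hs hsτ hτe heN,
    wCUSUM_eq_abs_winner N hw' hs hsτ hτe heN, wCUSUM_eq_abs_winner N hw' hs hsb hbe heN,
    sq_abs, sq_abs, winner_psiContrast_of_eq_add_mul N hw hs hsb hbe heN hμ, hτ]
  ring
end
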